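/- Let (G, <) be an ordered group, x ∈ G, and (y_i)_{i ∈ ℤ} a family of elements of G such that x⁻¹·y_i·x = y_{i+1} for all i ∈ ℤ. Suppose for some i₀ ∈ ℤ that y_{i₀} ≠ 1 and ¬(y_{i₀} ∼ y_{i₀+1}). Then either (y_i ≪ y_{i+1} for all i ∈ ℤ, and y_i ≪ x for all i ∈ ℤ), or (y_{i+1} ≪ y_i for all i ∈ ℤ, and y_i ≪ x for all i ∈ ℤ). -/

import Mathlib

/-!
Conjugation by `x` is an order automorphism of `G`, so it preserves `≪`, and it shifts the
sequence: `x⁻¹ yᵢ x = yᵢ₊₁`. Since `y_{i₀}` and `y_{i₀+1}` are nontrivial and not equivalent, one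
of them is `≪` the other, and conjugating propagates this relation to every consecutive pair.
Finally `g ≪ x⁻¹ g x` forces `g ≪ x`: if `|x| ≤ |g|ⁿ` then
`|x⁻¹ g x| = x⁻¹ |g| x ≤ |x| |g| |x| ≤ |g|^(2n+1)`.
-/

def gabs {G : Type*} [Group G] [LinearOrder G] (g : G) : G := max g g⁻¹

def ArchEquiv {G : Type*} [Group G] [LinearOrder G] (g h : G) : Prop :=
  ∃ m n : ℕ, 0 < m ∧ 0 < n ∧ gabs g < gabs h ^ m ∧ gabs h < gabs g ^ n

def ArchLT {G : Type*} [Group G] [LinearOrder G] (g h : G) : Prop :=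
  ∀ n : ℕ, 0 < n → gabs g ^ n < gabs h

theorem Int.forall_of_iff_add_one {P : ℤ → Prop} (hP : ∀ i, P i ↔ P (i + 1)) {i₀ : ℤ}
    (h₀ : P i₀) (i : ℤ) : P i :=
  Int.inductionOn' i i₀ h₀ (fun k _ hk => (hP k).1 hk)
    (fun k _ hk => (hP (k - 1)).2 (by rwa [sub_add_cancel]))

section

variable {G : Type*} [Group G]

theorem forall_rel_succ_of_conj {R : G → G → Prop} {x : G} {y : ℤ → G}
    (hR : ∀ g h, R (x⁻¹ * g * x) (x⁻¹ * h * x) ↔ R g h) (hconj : ∀ i, x⁻¹ * y i * x = y (i + 1))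
    {i₀ : ℤ} (h₀ : R (y i₀) (y (i₀ + 1))) (i : ℤ) : R (y i) (y (i + 1)) :=
  Int.forall_of_iff_add_one (P := fun i => R (y i) (y (i + 1)))
    (fun i => by rw [← hconj (i + 1), ← hconj i, hR]) h₀ i

variable [LinearOrder G]

theorem gabs_eq_mabs (g : G) : gabs g = |g|ₘ := rfl

theorem archLT_inv_right_iff {g h : G} : ArchLT g h⁻¹ ↔ ArchLT g h := by
  simp only [ArchLT, gabs_eq_mabs, mabs_inv]

variable [MulLeftMono G]

theorem archLT_or_archLT_of_not_archEquiv {g h : G} (hg : g ≠ 1) (hh : h ≠ 1)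
    (hgh : ¬ ArchEquiv g h) : ArchLT g h ∨ ArchLT h g := by
  by_contra! ⟨hgh', hhg'⟩
  simp only [ArchLT, not_forall, not_lt] at hgh' hhg'
  obtain ⟨n, -, hn⟩ := hgh'
  obtain ⟨m, -, hm⟩ := hhg'
  refine hgh ⟨m + 1, n + 1, m.succ_pos, n.succ_pos, hm.trans_lt ?_, hn.trans_lt ?_⟩
  · exact pow_lt_pow_right' (one_lt_mabs.2 hh) m.lt_succ_self
  · exact pow_lt_pow_right' (one_lt_mabs.2 hg) n.lt_succ_self

variable [MulRightMono G]

theorem strictMono_conj (x : G) : StrictMono fun g : G => x⁻¹ * g * x :=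
  fun _ _ h => mul_lt_mul_left (mul_lt_mul_right h _) _

theorem gabs_conj (x g : G) : gabs (x⁻¹ * g * x) = x⁻¹ * gabs g * x := by
  rw [gabs, gabs, (strictMono_conj x).monotone.map_max]
  congr 1
  group

theorem ArchLT.conj {g h : G} (x : G) (H : ArchLT g h) : ArchLT (x⁻¹ * g * x) (x⁻¹ * h * x) := by
  intro n hn
  have hpow : (x⁻¹ * gabs g * x) ^ n = x⁻¹ * gabs g ^ n * x := by
    simpa using conj_pow (a := x⁻¹) (b := gabs g) (i := n)
  rw [gabs_conj, gabs_conj, hpow]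
  exact strictMono_conj x (H n hn)

theorem archLT_conj_iff {g h : G} (x : G) :
    ArchLT (x⁻¹ * g * x) (x⁻¹ * h * x) ↔ ArchLT g h :=
  ⟨fun H => by simpa [mul_assoc] using H.conj x⁻¹, ArchLT.conj x⟩

theorem archLT_of_archLT_conj {g x : G} (H : ArchLT g (x⁻¹ * g * x)) : ArchLT g x := by
  intro n hn
  by_contra! hx
  rw [gabs_eq_mabs] at hx
  have key : gabs (x⁻¹ * g * x) ≤ gabs g ^ (2 * n + 1) := calc
    gabs (x⁻¹ * g * x) = x⁻¹ * gabs g * x := gabs_conj x g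
    _ ≤ gabs g ^ n * gabs g * gabs g ^ n :=
      mul_le_mul' (mul_le_mul_left ((inv_le_mabs x).trans hx) _) ((le_mabs_self x).trans hx)
    _ = gabs g ^ (2 * n + 1) := by rw [← pow_succ, ← pow_add]; ring_nf
  exact ((H (2 * n + 1) (by omega)).trans_le key).false

theorem archLT_of_archLT_conj_inv {g x : G} (H : ArchLT g (x * g * x⁻¹)) : ArchLT g x :=
  archLT_inv_right_iff.1 (archLT_of_archLT_conj (by rwa [inv_inv]))

end

/-- In an ordered group, if `x⁻¹ yᵢ x = yᵢ₊₁` for all `i ∈ ℤ`, and for some `i₀` we have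
`y_{i₀} ≠ 1` and `¬(y_{i₀} ∼ y_{i₀+1})`, then either
`⋯ ≪ y_{i-1} ≪ y_i ≪ y_{i+1} ≪ ⋯ ≪ x` or `⋯ ≪ y_{i+1} ≪ y_i ≪ y_{i-1} ≪ ⋯ ≪ x`. -/
theorem archLT_chain_of_conj {G : Type*} [Group G] [LinearOrder G]
    (hl : ∀ a b c : G, a < b → c * a < c * b)
    (hr : ∀ a b c : G, a < b → a * c < b * c)
    (x : G) (y : ℤ → G) (hconj : ∀ i : ℤ, x⁻¹ * y i * x = y (i + 1))
    (i₀ : ℤ) (hy : y i₀ ≠ 1) (hne : ¬ ArchEquiv (y i₀) (y (i₀ + 1))) :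
    ((∀ i : ℤ, ArchLT (y i) (y (i + 1))) ∧ ∀ i : ℤ, ArchLT (y i) x) ∨
    ((∀ i : ℤ, ArchLT (y (i + 1)) (y i)) ∧ ∀ i : ℤ, ArchLT (y i) x) := by
  have : MulLeftStrictMono G := ⟨fun c _ _ h => hl _ _ c h⟩
  have : MulRightStrictMono G := ⟨fun c _ _ h => hr _ _ c h⟩
  have := mulLeftMono_of_mulLeftStrictMono G
  have := mulRightMono_of_mulRightStrictMono G
  have hy' : y (i₀ + 1) ≠ 1 := by
    rw [← hconj i₀, Ne, mul_assoc, inv_mul_eq_one, right_eq_mul]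
    exact hy
  rcases archLT_or_archLT_of_not_archEquiv hy hy' hne with h | h
  · have hall := forall_rel_succ_of_conj (fun _ _ => archLT_conj_iff x) hconj h
    exact .inl ⟨hall, fun i => archLT_of_archLT_conj (hconj i ▸ hall i)⟩
  · have hall := forall_rel_succ_of_conj (R := fun g h => ArchLT h g)
      (fun _ _ => archLT_conj_iff x) hconj h
    refine .inr ⟨hall, fun i => ?_⟩
    obtain ⟨j, rfl⟩ : ∃ j, i = j + 1 := ⟨i - 1, by ring⟩
    have hprev : x * y (j + 1) * x⁻¹ = y j := by
      rw [← hconj j]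
      group
    exact archLT_of_archLT_conj_inv (hprev ▸ hall j)
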